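/- arXiv:2510.03499 — 2 statements merged into one kernel-verified Lean document; each statement's English description precedes it below -/
import Mathlib

section
/- Let G be a banana tree and let D and D' be effective divisors on G. Then D is linearly equivalent to D' if and only if D can be transformed into D' by a finite sequence of legal adjacency moves. -/
open Finset

attribute [local instance] Classical.propDecidable

noncomputable section

/-- A finite loopless multigraph on vertex type `V`, given by a symmetric
edge-multiplicity function: `mul u v` is the number of edges joining `u` and `v`. -/
structure Multigraph (V : Type) [Fintype V] where
  mul : V → V → ℕ
  symm : ∀ u v, mul u v = mul v u
  loopless : ∀ v, mul v v = 0

namespace Multigraph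

variable {V : Type} [Fintype V]

/-- The underlying simple graph of a multigraph. -/
def underlying (G : Multigraph V) : SimpleGraph V where
  Adj u v := 0 < G.mul u v
  symm := by
    constructor
    intro u v h
    rwa [G.symm] at h
  loopless := by
    constructor
    intro v h
    simp [G.loopless] at h

/-- A multigraph is connected if its underlying simple graph is. -/
def Connected (G : Multigraph V) : Prop := G.underlying.Connected

/-- A banana tree is a multigraph whose underlying simple graph is a tree. -/
def IsBananaTree (G : Multigraph V) : Prop := G.underlying.IsTree

/-- The valence (degree) of a vertex. -/
def valence (G : Multigraph V) (v : V) : ℕ := ∑ w, G.mul v w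

/-- The number of edges of a multigraph. -/
def edgeCount (G : Multigraph V) : ℕ := (∑ u, ∑ v, G.mul u v) / 2

/-- The genus (first Betti number) `|E| - |V| + 1` of a connected multigraph. -/
def genus (G : Multigraph V) : ℕ := G.edgeCount + 1 - Fintype.card V

/-- The degree of a divisor: the total number of chips. -/
def degree (D : V → ℤ) : ℤ := ∑ v, D v

/-- A divisor is effective if it is nonnegative everywhere. -/
def Effective (D : V → ℤ) : Prop := ∀ v, 0 ≤ D v

/-- Linear equivalence of divisors: `D'` is obtained from `D` by a finite sequence of
chip-firing moves, equivalently (for connected graphs) via an integral firing script `σ`. -/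
def LinEquiv (G : Multigraph V) (D D' : V → ℤ) : Prop :=
  ∃ σ : V → ℤ, ∀ v, D' v = D v + ∑ w, (G.mul v w : ℤ) * (σ w - σ v)

/-- A divisor has positive rank if for every vertex `v` it is linearly equivalent to an
effective divisor placing at least one chip on `v`. -/
def PosRank (G : Multigraph V) (D : V → ℤ) : Prop :=
  ∀ v, ∃ D', G.LinEquiv D D' ∧ Effective D' ∧ 1 ≤ D' v

/-- The (divisorial) gonality: the minimum degree of a positive-rank effective divisor. -/
def gonality (G : Multigraph V) : ℕ :=
  sInf {d : ℕ | ∃ D : V → ℤ, Effective D ∧ G.PosRank D ∧ degree D = (d : ℤ)}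

/-- `f(G, v, k)`: the minimum degree of an effective divisor `D` on `G` such that
`D + k·v` has positive rank. -/
def fmin (G : Multigraph V) (v : V) (k : ℕ) : ℕ :=
  sInf {d : ℕ | ∃ D : V → ℤ, Effective D ∧
    G.PosRank (fun u => D u + if u = v then (k : ℤ) else 0) ∧ degree D = (d : ℤ)}

/-- Delete a vertex from a multigraph. -/
def deleteVertex (G : Multigraph V) (v : V) : Multigraph {u : V // u ≠ v} where
  mul a b := G.mul a.1 b.1
  symm := fun a b => G.symm a.1 b.1
  loopless := fun a => G.loopless a.1

/-- Delete one single edge between `u` and `w` (if any) from a multigraph. -/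
def deleteOneEdge (G : Multigraph V) (u w : V) : Multigraph V where
  mul x y := if (x = u ∧ y = w) ∨ (x = w ∧ y = u) then G.mul x y - 1 else G.mul x y
  symm := by
    intro x y
    by_cases h : (x = u ∧ y = w) ∨ (x = w ∧ y = u)
    · have h' : (y = u ∧ x = w) ∨ (y = w ∧ x = u) := by tauto
      simp [h, h', G.symm x y]
    · have h' : ¬((y = u ∧ x = w) ∨ (y = w ∧ x = u)) := by tauto
      simp [h, h', G.symm x y]
  loopless := by
    intro v
    by_cases h : (v = u ∧ v = w) ∨ (v = w ∧ v = u)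
    · simp [h, G.loopless]
    · simp [h, G.loopless]

/-- The adjacency move from `v` to `w` on a banana tree: the subset-firing move at the
connected component of `v` after removing the `v`-`w` edge bunch.  Its net effect is to
move `|E(v,w)|` chips from `v` to `w`. -/
def adjMove (G : Multigraph V) (v w : V) (D : V → ℤ) : V → ℤ :=
  fun u => if u = v then D u - (G.mul v w : ℤ)
    else if u = w then D u + (G.mul v w : ℤ) else D u

/-- A single legal adjacency move: both divisors are effective and the second is
obtained from the first by an adjacency move between adjacent vertices. -/
def LegalAdjStep (G : Multigraph V) (D D' : V → ℤ) : Prop :=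
  ∃ v w, G.underlying.Adj v w ∧ Effective D ∧ Effective D' ∧ D' = G.adjMove v w D

/-- A scramble: a collection of nonempty vertex sets (eggs), each inducing a connected
subgraph. -/
def IsScramble (G : Multigraph V) (S : Finset (Finset V)) : Prop :=
  ∀ X ∈ S, X.Nonempty ∧ (G.underlying.induce (X : Set V)).Connected

/-- A hitting set of a scramble: a set of vertices meeting every egg. -/
def IsHittingSet (S : Finset (Finset V)) (T : Finset V) : Prop :=
  ∀ X ∈ S, (X ∩ T).Nonempty

/-- The hitting number of a scramble. -/
def hittingNumber (S : Finset (Finset V)) : ℕ∞ :=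
  sInf {t : ℕ∞ | ∃ T : Finset V, IsHittingSet S T ∧ (T.card : ℕ∞) = t}

/-- The simple graph remaining after removing `c u w` of the edges of each bunch. -/
def cutGraph (G : Multigraph V) (c : V → V → ℕ) : SimpleGraph V where
  Adj u w := u ≠ w ∧ c u w < G.mul u w ∧ c w u < G.mul w u
  symm := ⟨fun u w h => ⟨h.1.symm, h.2.2, h.2.1⟩⟩
  loopless := ⟨fun u h => h.1 rfl⟩

/-- `c` describes an egg-cut of the scramble `S`: a set of edges of `G` (given by the
number `c u w` of edges removed from each bunch) whose removal leaves at least two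
connected components each completely containing an egg. -/
def IsEggCut (G : Multigraph V) (S : Finset (Finset V)) (c : V → V → ℕ) : Prop :=
  (∀ u w, c u w = c w u) ∧ (∀ u w, c u w ≤ G.mul u w) ∧
  ∃ X₁ ∈ S, ∃ X₂ ∈ S,
    (∀ x ∈ X₁, ∀ y ∈ X₁, (G.cutGraph c).Reachable x y) ∧
    (∀ x ∈ X₂, ∀ y ∈ X₂, (G.cutGraph c).Reachable x y) ∧
    (∀ x ∈ X₁, ∀ y ∈ X₂, ¬ (G.cutGraph c).Reachable x y)

/-- The egg-cut number of a scramble (`⊤` if no egg-cut exists). -/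
def eggCutNumber (G : Multigraph V) (S : Finset (Finset V)) : ℕ∞ :=
  sInf {t : ℕ∞ | ∃ c : V → V → ℕ, G.IsEggCut S c ∧
    ((∑ u, ∑ w, c u w : ℕ) : ℕ∞) = 2 * t}

/-- The order of a scramble: the minimum of its hitting number and egg-cut number. -/
def scrambleOrder (G : Multigraph V) (S : Finset (Finset V)) : ℕ∞ :=
  min (hittingNumber S) (G.eggCutNumber S)

/-- The scramble number of a multigraph: the maximum order of a scramble on it. -/
def scrambleNumber (G : Multigraph V) : ℕ∞ :=
  sSup {m : ℕ∞ | ∃ S : Finset (Finset V), G.IsScramble S ∧ G.scrambleOrder S = m}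

/-- The weight of a node `t` in a tree-cut decomposition `(T, X)`: the number of vertices
mapped to `t` plus the number of edges routed through `t` with neither endpoint mapped
to `t`. -/
def nodeWeight (G : Multigraph V) {N : Type} [Fintype N] (T : SimpleGraph N)
    (X : V → N) (t : N) : ℕ :=
  (Finset.univ.filter fun v => X v = t).card +
    (∑ u, ∑ w, if X u ≠ t ∧ X w ≠ t ∧
        ¬ (T.deleteEdges {e | t ∈ e}).Reachable (X u) (X w)
      then G.mul u w else 0) / 2

/-- The weight of a link `pq` in a tree-cut decomposition `(T, X)`: the number of edges
of `G` routed through that link. -/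
def linkWeight (G : Multigraph V) {N : Type} (T : SimpleGraph N)
    (X : V → N) (p q : N) : ℕ :=
  (∑ u, ∑ w, if ¬ (T.deleteEdges {s(p, q)}).Reachable (X u) (X w)
    then G.mul u w else 0) / 2

/-- The width of a tree-cut decomposition `(T, X)`: the maximum of all node and link
weights. -/
def tcdWidth (G : Multigraph V) {N : Type} [Fintype N] (T : SimpleGraph N)
    (X : V → N) : ℕ :=
  max (Finset.univ.sup fun t => G.nodeWeight T X t)
      (Finset.univ.sup fun p : N × N =>
        if T.Adj p.1 p.2 then G.linkWeight T X p.1 p.2 else 0)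

/-- The screewidth of a multigraph: the minimum width of a tree-cut decomposition. -/
def screewidth (G : Multigraph V) : ℕ :=
  sInf {w : ℕ | ∃ (m : ℕ) (T : SimpleGraph (Fin m)), T.IsTree ∧
    ∃ X : V → Fin m, G.tcdWidth T X = w}

/-- The banana path on `n+1` vertices `v_0, …, v_n`, with `a i` edges joining
`v_i` and `v_{i+1}` (for `0 ≤ i < n`). -/
def bananaPath (n : ℕ) (a : ℕ → ℕ) : Multigraph (Fin (n + 1)) where
  mul i j := if i.val + 1 = j.val then a i.val else if j.val + 1 = i.val then a j.val else 0
  symm := by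
    intro u v
    split_ifs <;> first | rfl | (exfalso; omega)
  loopless := by
    intro v
    have h : ¬ (v.val + 1 = v.val) := by omega
    simp [h]

/-- The banana star with central vertex `Sum.inl ()` and, for each `i : Fin k`,
`r i` leaves joined to the center by `a i` parallel edges. -/
def bananaStar (k : ℕ) (a r : Fin k → ℕ) :
    Multigraph (Unit ⊕ (Σ i : Fin k, Fin (r i))) where
  mul x y :=
    match x, y with
    | Sum.inl _, Sum.inr ⟨i, _⟩ => a i
    | Sum.inr ⟨i, _⟩, Sum.inl _ => a i
    | _, _ => 0
  symm := by
    intro u v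
    rcases u with u | ⟨i, li⟩ <;> rcases v with v | ⟨j, lj⟩ <;> rfl
  loopless := by
    intro v
    rcases v with v | ⟨i, li⟩ <;> rfl

end Multigraph

/-!
A nonnegative firing script can be unwound one level at a time: firing the set where the
script is maximal keeps the divisor effective, since its vertices end with at least as many
chips as in the target divisor and all other vertices with at least as many as in the source.
Firing a set `A` is the same as performing the adjacency moves across all pairs
`(v, w) ∈ A × Aᶜ`, in any order; along the way vertices of `A` only lose chips and the others
only gain, so every intermediate divisor is effective. Conversely, every bunch of a banana tree
is a bridge, and the adjacency move from `v` to `w` is the firing of the component of `v` once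
that bunch is deleted.
-/

namespace Multigraph

variable {V : Type} [Fintype V] (G : Multigraph V)

/-- The change of a divisor when every vertex `v` fires `σ v` times. -/
def fire (σ : V → ℤ) : V → ℤ := fun v => ∑ w, (G.mul v w : ℤ) * (σ w - σ v)

theorem linEquiv_iff_exists_fire {D D' : V → ℤ} :
    G.LinEquiv D D' ↔ ∃ σ, D' = D + G.fire σ := by
  simp only [LinEquiv, funext_iff, Pi.add_apply, fire]

theorem fire_add (σ τ : V → ℤ) : G.fire (σ + τ) = G.fire σ + G.fire τ := by
  ext v
  simp only [fire, Pi.add_apply, ← sum_add_distrib]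
  exact sum_congr rfl fun w _ => by ring

theorem fire_sub_const (σ : V → ℤ) (c : ℤ) : G.fire (fun v => σ v - c) = G.fire σ := by
  ext v
  simp only [fire, sub_sub_sub_cancel_right]

@[simp]
theorem fire_zero : G.fire 0 = 0 := by
  ext v
  simp [fire]

theorem LinEquiv.refl (D : V → ℤ) : G.LinEquiv D D :=
  G.linEquiv_iff_exists_fire.2 ⟨0, by simp⟩

variable {G} in
theorem LinEquiv.trans {D D' D'' : V → ℤ} (h : G.LinEquiv D D') (h' : G.LinEquiv D' D'') :
    G.LinEquiv D D'' := by
  obtain ⟨σ, rfl⟩ := G.linEquiv_iff_exists_fire.1 h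
  obtain ⟨τ, rfl⟩ := G.linEquiv_iff_exists_fire.1 h'
  exact G.linEquiv_iff_exists_fire.2 ⟨σ + τ, by rw [fire_add, add_assoc]⟩

variable {G} in
theorem LinEquiv.exists_nonneg_fire {D D' : V → ℤ} (h : G.LinEquiv D D') :
    ∃ σ, 0 ≤ σ ∧ D' = D + G.fire σ := by
  obtain ⟨σ, rfl⟩ := G.linEquiv_iff_exists_fire.1 h
  obtain ⟨c, hc⟩ := (Set.finite_range σ).bddBelow
  exact ⟨fun v => σ v - c, fun v => sub_nonneg.2 (hc ⟨v, rfl⟩), by rw [fire_sub_const]⟩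

theorem adjMove_eq_add (v w : V) (D : V → ℤ) : G.adjMove v w D = D + G.adjMove v w 0 := by
  ext u
  simp only [adjMove, Pi.add_apply, Pi.zero_apply]
  split_ifs <;> ring

theorem adjMove_of_mul_eq_zero {v w : V} (h : G.mul v w = 0) (D : V → ℤ) :
    G.adjMove v w D = D := by
  ext u
  simp only [adjMove, h, Nat.cast_zero, sub_zero, add_zero, ite_self]

theorem fire_indicator_eq_sum_adjMove (A : Finset V) :
    G.fire (fun u => if u ∈ A then 1 else 0) = ∑ p ∈ A ×ˢ Aᶜ, G.adjMove p.1 p.2 0 := by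
  ext u
  rw [Finset.sum_apply, sum_product]
  simp only [fire, adjMove, Pi.zero_apply, zero_sub, zero_add]
  by_cases hu : u ∈ A
  · simp only [hu, ↓reduceIte, sum_ite_irrel, sum_neg_distrib, sum_ite_eq, mem_compl,
      not_true_eq_false]
    calc ∑ x, (G.mul u x : ℤ) * ((if x ∈ A then 1 else 0) - 1)
        = ∑ x, -(if x ∈ Aᶜ then (G.mul u x : ℤ) else 0) :=
          sum_congr rfl fun x _ => by by_cases hx : x ∈ A <;> simp [hx]
      _ = -∑ x ∈ Aᶜ, (G.mul u x : ℤ) := by rw [sum_neg_distrib, sum_ite_mem, univ_inter]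
  · simp only [hu, ↓reduceIte, sub_zero, mul_ite, mul_one, mul_zero, sum_ite_mem, univ_inter,
      sum_ite_irrel, sum_neg_distrib, sum_ite_eq, mem_compl, not_false_eq_true]
    refine sum_congr rfl fun x hx => ?_
    rw [if_neg (ne_of_mem_of_not_mem hx hu).symm, G.symm]

theorem effective_add_sum_adjMove_of_subset {P Q : Finset (V × V)} (hQP : Q ⊆ P)
    (hP : ∀ p ∈ P, ∀ q ∈ P, p.1 ≠ q.2) {D : V → ℤ} (hD : Effective D)
    (hE : Effective (D + ∑ p ∈ P, G.adjMove p.1 p.2 0)) :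
    Effective (D + ∑ p ∈ Q, G.adjMove p.1 p.2 0) := by
  intro u
  have hEu := hE u
  simp only [Pi.add_apply, Finset.sum_apply] at hEu ⊢
  by_cases hu : ∃ p ∈ P, p.1 = u
  · obtain ⟨p, hp, rfl⟩ := hu
    have hloss : ∀ q ∈ P, G.adjMove q.1 q.2 0 p.1 ≤ 0 := fun q hq => by
      simp only [adjMove, if_neg (hP p hp q hq), Pi.zero_apply]
      split_ifs <;> simp
    have hsplit := sum_sdiff hQP (f := fun q => G.adjMove q.1 q.2 0 p.1)
    have hrest : ∑ q ∈ P \ Q, G.adjMove q.1 q.2 0 p.1 ≤ 0 :=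
      sum_nonpos fun q hq => hloss q (sdiff_subset hq)
    linarith
  · push Not at hu
    have hgain : ∀ q ∈ Q, 0 ≤ G.adjMove q.1 q.2 0 u := fun q hq => by
      simp only [adjMove, if_neg (hu q (hQP hq)).symm, Pi.zero_apply]
      split_ifs <;> simp
    linarith [hD u, sum_nonneg hgain]

theorem reflTransGen_add_sum_adjMove {P : Finset (V × V)} (hP : ∀ p ∈ P, ∀ q ∈ P, p.1 ≠ q.2)
    {D : V → ℤ} (hD : Effective D) (hE : Effective (D + ∑ p ∈ P, G.adjMove p.1 p.2 0)) :
    Relation.ReflTransGen G.LegalAdjStep D (D + ∑ p ∈ P, G.adjMove p.1 p.2 0) := by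
  suffices ∀ Q ⊆ P, Relation.ReflTransGen G.LegalAdjStep D (D + ∑ p ∈ Q, G.adjMove p.1 p.2 0) from
    this P subset_rfl
  intro Q
  induction Q using Finset.induction_on with
  | empty => simpa using .refl
  | insert p Q hpQ ih =>
    intro hQP
    have hQ : Q ⊆ P := (insert_subset_iff.1 hQP).2
    have hEQ := G.effective_add_sum_adjMove_of_subset hQ hP hD hE
    have hEpQ := G.effective_add_sum_adjMove_of_subset hQP hP hD hE
    have hmove : D + ∑ q ∈ insert p Q, G.adjMove q.1 q.2 0
        = G.adjMove p.1 p.2 (D + ∑ q ∈ Q, G.adjMove q.1 q.2 0) := by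
      rw [sum_insert hpQ, G.adjMove_eq_add _ _ (D + _)]
      abel
    rw [hmove] at hEpQ ⊢
    by_cases hadj : G.underlying.Adj p.1 p.2
    · exact (ih hQ).tail ⟨p.1, p.2, hadj, hEQ, hEpQ, rfl⟩
    · rw [G.adjMove_of_mul_eq_zero (Nat.eq_zero_of_not_pos hadj)]
      exact ih hQ

theorem reflTransGen_add_fire_indicator (A : Finset V) {D : V → ℤ} (hD : Effective D)
    (hE : Effective (D + G.fire fun u => if u ∈ A then 1 else 0)) :
    Relation.ReflTransGen G.LegalAdjStep D (D + G.fire fun u => if u ∈ A then 1 else 0) := by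
  rw [fire_indicator_eq_sum_adjMove] at hE ⊢
  refine G.reflTransGen_add_sum_adjMove (fun p hp q hq => ?_) hD hE
  exact ne_of_mem_of_not_mem (mem_product.1 hp).1 (mem_compl.1 (mem_product.1 hq).2)

theorem effective_add_fire_maxLevel {σ : V → ℤ} {M : ℤ} (hM : ∀ v, σ v ≤ M) {D : V → ℤ}
    (hD : Effective D) (hD' : Effective (D + G.fire σ)) :
    Effective (D + G.fire fun u => if u ∈ ({u | σ u = M} : Finset V) then 1 else 0) := by
  intro u
  simp only [Pi.add_apply, fire, mem_filter, mem_univ, true_and]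
  by_cases hu : σ u = M
  · have hle : G.fire σ u ≤ ∑ w, (G.mul u w : ℤ) * ((if σ w = M then 1 else 0) - 1) := by
      refine sum_le_sum fun w _ => mul_le_mul_of_nonneg_left ?_ (Int.natCast_nonneg _)
      by_cases hw : σ w = M
      · simp [hw, hu]
      · have := hM w
        simp only [hw, if_false, hu]
        omega
    have hD'u := hD' u
    rw [Pi.add_apply] at hD'u
    rw [if_pos hu]
    linarith
  · have hgain : ∀ w, 0 ≤ (G.mul u w : ℤ) * ((if σ w = M then 1 else 0) - 0) := fun w => by
      split_ifs <;> simp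
    simpa [hu] using add_nonneg (hD u) (sum_nonneg fun w _ => hgain w)

theorem reflTransGen_add_fire_of_nonneg {σ : V → ℤ} (hσ : 0 ≤ σ) {D : V → ℤ}
    (hD : Effective D) (hD' : Effective (D + G.fire σ)) :
    Relation.ReflTransGen G.LegalAdjStep D (D + G.fire σ) := by
  induction hn : (∑ v, σ v).toNat using Nat.strong_induction_on generalizing σ D with
  | _ n ih =>
  by_cases hσ0 : σ = 0
  · subst hσ0
    simpa using .refl
  obtain ⟨v₀, hv₀⟩ := Function.ne_iff.1 hσ0
  obtain ⟨m, -, hm⟩ := exists_max_image univ σ ⟨v₀, mem_univ v₀⟩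
  set A : Finset V := {u | σ u = σ m}
  set ι : V → ℤ := fun u => if u ∈ A then 1 else 0
  have hE : Effective (D + G.fire ι) :=
    G.effective_add_fire_maxLevel (fun v => hm v (mem_univ v)) hD hD'
  have hsplit : D + G.fire σ = D + G.fire ι + G.fire (σ - ι) := by
    rw [add_assoc, ← fire_add, add_sub_cancel]
  have hσι : 0 ≤ σ - ι := fun u => by
    by_cases hu : u ∈ A
    · have hum : σ u = σ m := by simpa [A] using hu
      have hpos : 0 < σ v₀ := lt_of_le_of_ne (hσ v₀) (Ne.symm hv₀)
      simp only [Pi.zero_apply, Pi.sub_apply, ι, if_pos hu]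
      linarith [hm v₀ (mem_univ _)]
    · simpa [ι, hu] using hσ u
  have hsum : ∑ v, (σ - ι) v = ∑ v, σ v - #A := by
    simp [ι, sum_sub_distrib, sum_ite_mem]
  have hA : 0 < #A := card_pos.2 ⟨m, by simp [A]⟩
  rw [hsplit] at hD' ⊢
  refine (G.reflTransGen_add_fire_indicator A hD hE).trans (ih _ ?_ hσι hE hD' rfl)
  have := sum_nonneg fun v (_ : v ∈ univ) => hσι v
  omega

theorem reflTransGen_legalAdjStep_of_linEquiv {D D' : V → ℤ} (hD : Effective D)
    (hD' : Effective D') (h : G.LinEquiv D D') : Relation.ReflTransGen G.LegalAdjStep D D' := by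
  obtain ⟨σ, hσ, rfl⟩ := h.exists_nonneg_fire
  exact G.reflTransGen_add_fire_of_nonneg hσ hD hD'

theorem add_fire_indicator_eq_adjMove {A : Finset V} {v w : V} (hv : v ∈ A) (hw : w ∉ A)
    (hcut : ∀ x ∈ A, ∀ y ∉ A, G.underlying.Adj x y → x = v ∧ y = w) (D : V → ℤ) :
    D + G.fire (fun u => if u ∈ A then 1 else 0) = G.adjMove v w D := by
  rw [fire_indicator_eq_sum_adjMove, G.adjMove_eq_add v w D,
    sum_eq_single_of_mem (v, w) (mem_product.2 ⟨hv, mem_compl.2 hw⟩)]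
  rintro ⟨x, y⟩ hxy hne
  obtain ⟨hx, hy⟩ := mem_product.1 hxy
  have hxy : ¬ G.underlying.Adj x y := fun hadj => by
    obtain ⟨rfl, rfl⟩ := hcut x hx y (mem_compl.1 hy) hadj
    exact hne rfl
  exact G.adjMove_of_mul_eq_zero (Nat.eq_zero_of_not_pos hxy) 0

theorem linEquiv_adjMove_of_isBridge {v w : V} (h : G.underlying.IsBridge s(v, w))
    (D : V → ℤ) : G.LinEquiv D (G.adjMove v w D) := by
  set H := G.underlying.deleteEdges {s(v, w)}
  set A : Finset V := {u | H.Reachable v u}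
  have hcut : ∀ x ∈ A, ∀ y ∉ A, G.underlying.Adj x y → x = v ∧ y = w := by
    intro x hx y hy hadj
    simp only [A, mem_filter, mem_univ, true_and] at hx hy
    by_contra hne
    have hedge : s(x, y) ≠ s(v, w) := by
      rw [Ne, Sym2.eq_iff]
      rintro (hvw | ⟨rfl, rfl⟩)
      · exact hne hvw
      · exact SimpleGraph.isBridge_iff.1 h hx
    exact hy (hx.trans (SimpleGraph.deleteEdges_adj.2 ⟨hadj, hedge⟩).reachable)
  refine G.linEquiv_iff_exists_fire.2 ⟨_, (G.add_fire_indicator_eq_adjMove ?_ ?_ hcut D).symm⟩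
  · simp [A]
  · simpa [A] using SimpleGraph.isBridge_iff.1 h

variable {G} in
theorem LinEquiv.of_legalAdjStep (hG : G.IsBananaTree) {D D' : V → ℤ}
    (h : G.LegalAdjStep D D') : G.LinEquiv D D' := by
  obtain ⟨v, w, hadj, -, -, rfl⟩ := h
  exact G.linEquiv_adjMove_of_isBridge
    (SimpleGraph.isAcyclic_iff_forall_adj_isBridge.1 hG.isAcyclic hadj) D

variable {G} in
theorem LinEquiv.of_reflTransGen_legalAdjStep (hG : G.IsBananaTree) {D D' : V → ℤ}
    (h : Relation.ReflTransGen G.LegalAdjStep D D') : G.LinEquiv D D' := by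
  induction h with
  | refl => exact LinEquiv.refl G D
  | tail _ hstep ih => exact ih.trans (.of_legalAdjStep hG hstep)

end Multigraph

open Multigraph in
/-- On a banana tree, two effective divisors are linearly equivalent iff one
can be transformed into the other by a finite sequence of legal adjacency moves. -/
theorem linEquiv_iff_legal_adjacency_moves
    {V : Type} [Fintype V] (G : Multigraph V) (hG : G.IsBananaTree)
    (D D' : V → ℤ) (hD : Effective D) (hD' : Effective D') :
    G.LinEquiv D D' ↔ Relation.ReflTransGen G.LegalAdjStep D D' := by
  exact ⟨G.reflTransGen_legalAdjStep_of_linEquiv hD hD', .of_reflTransGen_legalAdjStep hG⟩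
end
end

section
/- Let a_1 > a_2 > ... > a_k ≥ 1 be integers, let r_1, ..., r_k be positive integers, and let G = S_{(a_1^{r_1}, ..., a_k^{r_k})} be the corresponding banana star. Then gon(G) = min over 0 ≤ j ≤ k of ( Σ_{i=1}^{j} r_i + a_{j+1} ), where a_{k+1} is taken to be 1. -/
open Finset

attribute [local instance] Classical.propDecidable

noncomputable section

/-! On a leaf `w` joined to the rest of the graph by `m` edges, chip-firing changes the number
of chips only by multiples of `m`, so `D w mod m` is an invariant of the linear equivalence
class. In the banana star, let `i` be the smallest type of a leaf `p` on which this residue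
vanishes. An effective `D' ~ D` with a chip on `p` has at least `a_i` chips there and at least
one chip on every leaf of smaller type (its residue is nonzero), so
`deg D ≥ r_1 + ⋯ + r_{i-1} + a_i`. If no residue vanishes, every leaf carries a chip and so
does the centre, so `deg D ≥ r_1 + ⋯ + r_k + 1`. Conversely, `a_{j+1}` chips on the centre and
one on each of the leaves of the first `j` types give positive rank: firing everything but
one of the remaining leaves moves at most `a_{j+1}` chips from the centre onto it. -/

namespace Multigraph

variable {V : Type} [Fintype V]

section LinEquiv

variable {G : Multigraph V} {D D' : V → ℤ}

theorem linEquiv_refl (G : Multigraph V) (D : V → ℤ) : G.LinEquiv D D :=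
  ⟨fun _ => 0, fun v => by simp⟩

theorem LinEquiv.degree_eq (h : G.LinEquiv D D') : degree D' = degree D := by
  obtain ⟨σ, hσ⟩ := h
  have hsymm : ∑ v, ∑ w, (G.mul v w : ℤ) * σ w = ∑ v, ∑ w, (G.mul v w : ℤ) * σ v := by
    rw [sum_comm]
    exact sum_congr rfl fun v _ => sum_congr rfl fun w _ => by rw [G.symm]
  have hflow : ∑ v, ∑ w, (G.mul v w : ℤ) * (σ w - σ v) = 0 := by
    simp only [mul_sub, sum_sub_distrib, hsymm, sub_self]
  simp only [degree, hσ, sum_add_distrib, hflow, add_zero]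

section Leaf

variable {v w : V}

theorem LinEquiv.dvd_sub_of_leaf (h : G.LinEquiv D D') (hleaf : ∀ u, u ≠ v → G.mul w u = 0) :
    (G.mul w v : ℤ) ∣ D' w - D w := by
  obtain ⟨σ, hσ⟩ := h
  rw [hσ w, add_sub_cancel_left, sum_eq_single v (fun u _ hu => by simp [hleaf u hu]) (by simp)]
  exact dvd_mul_right _ _

theorem LinEquiv.one_le_of_leaf_of_not_dvd (h : G.LinEquiv D D') (hD' : Effective D')
    (hleaf : ∀ u, u ≠ v → G.mul w u = 0) (hndvd : ¬ (G.mul w v : ℤ) ∣ D w) : 1 ≤ D' w := by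
  by_contra hlt
  have hzero : D' w = 0 := by have := hD' w; omega
  apply hndvd
  simpa [hzero] using h.dvd_sub_of_leaf hleaf

theorem LinEquiv.le_of_leaf_of_dvd (h : G.LinEquiv D D') (hleaf : ∀ u, u ≠ v → G.mul w u = 0)
    (hdvd : (G.mul w v : ℤ) ∣ D w) (hpos : 1 ≤ D' w) : (G.mul w v : ℤ) ≤ D' w :=
  Int.le_of_dvd (by omega) (by simpa using dvd_add (h.dvd_sub_of_leaf hleaf) hdvd)

/-- The move is realised by firing every vertex except `w`. -/
theorem linEquiv_adjMove_of_leaf (G : Multigraph V) (D : V → ℤ)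
    (hleaf : ∀ u, u ≠ v → G.mul w u = 0) : G.LinEquiv D (G.adjMove v w D) := by
  refine ⟨fun u => if u = w then 0 else 1, fun x => ?_⟩
  by_cases hxw : x = w
  · subst hxw
    rw [sum_eq_single v (fun u _ hu => by simp [hleaf u hu]) (by simp)]
    by_cases hvx : v = x
    · subst hvx
      simp [adjMove, G.loopless]
    · simp [adjMove, Ne.symm hvx, hvx, G.symm x v]
  · rw [sum_eq_single w (fun u _ hu => by simp [hu, hxw]) (by simp)]
    by_cases hxv : x = v
    · subst hxv
      simp [adjMove, hxw, sub_eq_add_neg]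
    · simp [adjMove, hxv, hxw, G.symm x w, hleaf x hxv]

end Leaf

end LinEquiv

theorem Effective.adjMove {G : Multigraph V} {D : V → ℤ} (hD : Effective D) {v w : V}
    (hchips : (G.mul v w : ℤ) ≤ D v) : Effective (G.adjMove v w D) := by
  intro u
  unfold Multigraph.adjMove
  split_ifs with hv
  · subst hv
    omega
  · have := hD u
    omega
  · exact hD u

theorem card_add_le_degree {D : V → ℤ} (hD : Effective D) {S : Finset V}
    (hS : ∀ v ∈ S, 1 ≤ D v) {x : V} (hx : x ∉ S) : (S.card : ℤ) + D x ≤ degree D :=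
  calc (S.card : ℤ) + D x = ∑ _v ∈ S, 1 + D x := by simp
    _ ≤ ∑ v ∈ S, D v + D x := by gcongr with v hv; exact hS v hv
    _ = ∑ v ∈ insert x S, D v := by rw [sum_insert hx, add_comm]
    _ ≤ degree D := sum_le_sum_of_subset_of_nonneg (subset_univ _) fun v _ _ => hD v

theorem gonality_le {G : Multigraph V} {D : V → ℤ} (hD : Effective D) (hpr : G.PosRank D)
    {n : ℕ} (hn : degree D = n) : G.gonality ≤ n :=
  Nat.sInf_le ⟨D, hD, hpr, hn⟩

theorem le_gonality {G : Multigraph V} {n : ℕ}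
    (h : ∀ D, Effective D → G.PosRank D → (n : ℤ) ≤ degree D) : n ≤ G.gonality := by
  have hones : G.PosRank fun _ => 1 := fun _ =>
    ⟨_, linEquiv_refl G _, fun _ => zero_le_one, le_rfl⟩
  obtain ⟨D, hD, hpr, hdeg⟩ : G.gonality ∈
      {d : ℕ | ∃ D : V → ℤ, Effective D ∧ G.PosRank D ∧ degree D = d} :=
    Nat.sInf_mem ⟨Fintype.card V, _, fun _ => zero_le_one, hones, by simp [degree]⟩
  exact_mod_cast hdeg ▸ h D hD hpr

section BananaStar

variable {k : ℕ} {a r : Fin k → ℕ}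

theorem bananaStar_mul_center_leaf (p : Σ i : Fin k, Fin (r i)) :
    (bananaStar k a r).mul (Sum.inl ()) (Sum.inr p) = a p.1 := rfl

theorem bananaStar_mul_leaf_eq_zero (p : Σ i : Fin k, Fin (r i)) :
    ∀ u, u ≠ Sum.inl () → (bananaStar k a r).mul (Sum.inr p) u = 0
  | Sum.inl (), hu => absurd rfl hu
  | Sum.inr _, _ => rfl

variable (k r) in
def lowLeaves (j : ℕ) : Finset (Unit ⊕ (Σ i : Fin k, Fin (r i))) :=
  (univ.filter fun p : Σ i : Fin k, Fin (r i) => p.1.val < j).map Function.Embedding.inr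

theorem inr_mem_lowLeaves {j : ℕ} {p : Σ i : Fin k, Fin (r i)} :
    Sum.inr p ∈ lowLeaves k r j ↔ p.1.val < j := by
  simp [lowLeaves]

theorem inl_notMem_lowLeaves {j : ℕ} : Sum.inl () ∉ lowLeaves k r j := by
  simp [lowLeaves]

theorem card_lowLeaves (j : ℕ) :
    (lowLeaves k r j).card = ∑ i : Fin k, if i.val < j then r i else 0 := by
  rw [lowLeaves, card_map, card_filter, Fintype.sum_sigma]
  refine sum_congr rfl fun i _ => ?_
  split_ifs <;> simp

variable (k a r) in
/-- Types are indexed from `0`, so `a ⟨j, _⟩` is the paper's `a_{j+1}`. -/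
def bananaStarBound (j : ℕ) : ℕ :=
  (∑ i : Fin k, if i.val < j then r i else 0) + (if h : j < k then a ⟨j, h⟩ else 1)

variable (k a r) in
def bananaStarDivisor (j : ℕ) (v : Unit ⊕ (Σ i : Fin k, Fin (r i))) : ℤ :=
  (if v ∈ lowLeaves k r j then 1 else 0) +
    if v = Sum.inl () then ((if h : j < k then a ⟨j, h⟩ else 1 : ℕ) : ℤ) else 0

theorem effective_bananaStarDivisor (j : ℕ) : Effective (bananaStarDivisor k a r j) := by
  intro v
  unfold bananaStarDivisor
  split_ifs <;> omega

theorem degree_bananaStarDivisor (j : ℕ) :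
    degree (bananaStarDivisor k a r j) = bananaStarBound k a r j := by
  simp only [degree, bananaStarDivisor, sum_add_distrib, sum_boole, sum_ite_eq', mem_univ,
    if_true, filter_mem_eq_inter, univ_inter, card_lowLeaves, bananaStarBound]
  push_cast
  rfl

theorem posRank_bananaStarDivisor (hanti : StrictAnti a) (ha : ∀ i, 1 ≤ a i) (j : ℕ) :
    (bananaStar k a r).PosRank (bananaStarDivisor k a r j) := by
  intro v
  by_cases hv : 1 ≤ bananaStarDivisor k a r j v
  · exact ⟨_, linEquiv_refl _ _, effective_bananaStarDivisor j, hv⟩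
  obtain ⟨p, rfl, hjp⟩ : ∃ p : Σ i : Fin k, Fin (r i), v = Sum.inr p ∧ j ≤ p.1.val := by
    rcases v with ⟨⟨⟩⟩ | p
    · simp only [bananaStarDivisor, inl_notMem_lowLeaves, if_true, if_false] at hv
      split_ifs at hv with hjk
      · have := ha ⟨j, hjk⟩
        omega
      · omega
    · simp only [bananaStarDivisor, inr_mem_lowLeaves, reduceCtorEq, if_false] at hv
      exact ⟨p, rfl, by split_ifs at hv <;> omega⟩
  have hjk : j < k := lt_of_le_of_lt hjp p.1.isLt
  have hap : a p.1 ≤ a ⟨j, hjk⟩ := hanti.antitone (show (⟨j, hjk⟩ : Fin k) ≤ p.1 from hjp)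
  refine ⟨_, linEquiv_adjMove_of_leaf _ _ (bananaStar_mul_leaf_eq_zero p),
    (effective_bananaStarDivisor j).adjMove ?_, ?_⟩
  · simp [bananaStarDivisor, inl_notMem_lowLeaves, bananaStar_mul_center_leaf, hjk, hap]
  · simpa [adjMove, bananaStarDivisor, inr_mem_lowLeaves, bananaStar_mul_center_leaf,
      Nat.not_lt.mpr hjp] using ha p.1

theorem card_lowLeaves_add_le_degree {D D' : Unit ⊕ (Σ i : Fin k, Fin (r i)) → ℤ}
    (h : (bananaStar k a r).LinEquiv D D') (hD' : Effective D') {j : ℕ}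
    (hndvd : ∀ q : Σ i : Fin k, Fin (r i), q.1.val < j → ¬ (a q.1 : ℤ) ∣ D (Sum.inr q))
    {x : Unit ⊕ (Σ i : Fin k, Fin (r i))} (hx : x ∉ lowLeaves k r j) :
    ((lowLeaves k r j).card : ℤ) + D' x ≤ degree D := by
  rw [← h.degree_eq]
  refine card_add_le_degree hD' ?_ hx
  rintro (⟨⟩ | q) hq
  · exact absurd hq inl_notMem_lowLeaves
  · exact h.one_le_of_leaf_of_not_dvd hD' (bananaStar_mul_leaf_eq_zero q)
      (hndvd q (inr_mem_lowLeaves.mp hq))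

theorem bananaStarBound_le_degree_of_dvd {D : Unit ⊕ (Σ i : Fin k, Fin (r i)) → ℤ}
    (hpr : (bananaStar k a r).PosRank D) {p : Σ i : Fin k, Fin (r i)}
    (hdvd : (a p.1 : ℤ) ∣ D (Sum.inr p))
    (hmin : ∀ q : Σ i : Fin k, Fin (r i), q.1.val < p.1.val → ¬ (a q.1 : ℤ) ∣ D (Sum.inr q)) :
    (bananaStarBound k a r p.1.val : ℤ) ≤ degree D := by
  obtain ⟨D', h, hD', hp⟩ := hpr (Sum.inr p)
  have hchips : (a p.1 : ℤ) ≤ D' (Sum.inr p) :=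
    h.le_of_leaf_of_dvd (bananaStar_mul_leaf_eq_zero p) hdvd hp
  have hcount := card_lowLeaves_add_le_degree h hD' hmin (x := Sum.inr p)
    (by simp [inr_mem_lowLeaves])
  rw [card_lowLeaves] at hcount
  simp only [bananaStarBound, dif_pos p.1.isLt, Fin.eta]
  push_cast at hcount ⊢
  linarith

theorem bananaStarBound_le_degree_of_forall_not_dvd {D : Unit ⊕ (Σ i : Fin k, Fin (r i)) → ℤ}
    (hpr : (bananaStar k a r).PosRank D)
    (hndvd : ∀ q : Σ i : Fin k, Fin (r i), ¬ (a q.1 : ℤ) ∣ D (Sum.inr q)) :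
    (bananaStarBound k a r k : ℤ) ≤ degree D := by
  obtain ⟨D', h, hD', hcentre⟩ := hpr (Sum.inl ())
  have hcount := card_lowLeaves_add_le_degree h hD' (j := k) (fun q _ => hndvd q)
    inl_notMem_lowLeaves
  rw [card_lowLeaves] at hcount
  simp only [bananaStarBound, lt_irrefl, dite_false]
  push_cast at hcount ⊢
  linarith

theorem exists_bananaStarBound_le_degree {D : Unit ⊕ (Σ i : Fin k, Fin (r i)) → ℤ}
    (hpr : (bananaStar k a r).PosRank D) :
    ∃ j ∈ range (k + 1), (bananaStarBound k a r j : ℤ) ≤ degree D := by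
  by_cases hdvd : ∃ p : Σ i : Fin k, Fin (r i), (a p.1 : ℤ) ∣ D (Sum.inr p)
  · obtain ⟨p, hp, hmin⟩ := (univ.filter fun p : Σ i : Fin k, Fin (r i) =>
      (a p.1 : ℤ) ∣ D (Sum.inr p)).exists_min_image (fun p => p.1.val)
        (hdvd.imp fun p hp => by simpa using hp)
    refine ⟨p.1.val, mem_range.mpr (by omega), bananaStarBound_le_degree_of_dvd hpr ?_ ?_⟩
    · simpa using hp
    · exact fun q hq hq' => absurd (hmin q (by simpa using hq')) (by omega)
  · simp only [not_exists] at hdvd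
    exact ⟨k, self_mem_range_succ k, bananaStarBound_le_degree_of_forall_not_dvd hpr hdvd⟩

end BananaStar

end Multigraph

open Multigraph in
theorem banana_star_gonality_general
    (k : ℕ) (a r : Fin k → ℕ) (hanti : StrictAnti a)
    (ha : ∀ i, 1 ≤ a i) :
    (Multigraph.bananaStar k a r).gonality =
      (Finset.range (k + 1)).inf' Finset.nonempty_range_add_one
        (fun j => (∑ i : Fin k, if i.val < j then r i else 0) +
          (if h : j < k then a ⟨j, h⟩ else 1)) := by
  change _ = (range (k + 1)).inf' nonempty_range_add_one (bananaStarBound k a r)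
  refine le_antisymm (le_inf' _ _ fun j _ => ?_) (le_gonality fun D _ hpr => ?_)
  · exact gonality_le (effective_bananaStarDivisor j) (posRank_bananaStarDivisor hanti ha j)
      (degree_bananaStarDivisor j)
  · obtain ⟨j, hj, hle⟩ := exists_bananaStarBound_le_degree hpr
    exact le_trans (by exact_mod_cast inf'_le _ hj) hle

open Multigraph in
/-- The gonality of the banana star `S_{(a_1^{r_1}, …, a_k^{r_k})}` (with
`a_1 > a_2 > ⋯ > a_k ≥ 1` and all `r_i ≥ 1`) equals
`min_{0 ≤ j ≤ k} ( Σ_{i=1}^{j} r_i + a_{j+1} )`, where `a_{k+1} = 1`. -/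
theorem banana_star_gonality
    (k : ℕ) (a r : Fin k → ℕ) (hanti : StrictAnti a)
    (ha : ∀ i, 1 ≤ a i) (hr : ∀ i, 1 ≤ r i) :
    (Multigraph.bananaStar k a r).gonality =
      (Finset.range (k + 1)).inf' Finset.nonempty_range_add_one
        (fun j => (∑ i : Fin k, if i.val < j then r i else 0) +
          (if h : j < k then a ⟨j, h⟩ else 1)) :=
  banana_star_gonality_general k a r hanti ha
end
end
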